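/- arXiv:math/0002155 — 4 statements merged into one kernel-verified Lean document; each statement's English description precedes it below -/
import Mathlib

section
/- For every t ∈ ℝ and every (x,y,z) ∈ S² ⊂ ℝ³, the vector w_t(x,y,z) = (x, y, z·cosh t + i·sinh t) ∈ ℂ³ is nonzero, so the Whitney map φ_t(x,y,z) = [w_t(x,y,z)] ∈ ℂP² is well defined. Moreover, for every t > 0 and all p, q ∈ S²: φ_t(p) = φ_t(q) if and only if p = q, or p and q both belong to {(0,0,1), (0,0,−1)}. In particular, for t > 0 the map φ_t is injective away from the two poles of S², and identifies the north and south poles to a single double point. -/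
/-- The vector of `ℂ³` defining the Whitney map `φ_t` at a point `(x,y,z) ∈ S²`. -/
noncomputable def whitneyVec (t : ℝ) (p : Fin 3 → ℝ) : Fin 3 → ℂ :=
  ![(p 0 : ℂ), (p 1 : ℂ), (p 2 : ℂ) * Real.cosh t + Complex.I * Real.sinh t]

lemma whitneyVec_ne_zero (t : ℝ) (p : Fin 3 → ℝ) (hp : ∑ i, p i ^ 2 = 1) :
    whitneyVec t p ≠ 0 := by
  intro h
  have h0 := congrFun h 0
  have h1 := congrFun h 1
  have h2 := congrFun h 2
  simp only [whitneyVec, Matrix.cons_val_zero, Matrix.cons_val_one, Matrix.head_cons,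
    Matrix.cons_val_two, Matrix.tail_cons, Pi.zero_apply, Complex.ofReal_eq_zero] at h0 h1 h2
  have hre := congrArg Complex.re h2
  simp [Complex.add_re, Complex.mul_re, Complex.I_re, Complex.I_im] at hre
  have hcosh : Real.cosh t ≠ 0 := ne_of_gt (Real.cosh_pos t)
  have h2' : p 2 = 0 := by
    rcases hre with hre | hre
    · exact hre
    · exact absurd hre hcosh
  rw [Fin.sum_univ_three, h0, h1, h2'] at hp
  norm_num at hp


lemma third_ne (t : ℝ) (ht : 0 < t) (z : ℝ) :
    (z : ℂ) * Real.cosh t + Complex.I * Real.sinh t ≠ 0 := by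
  intro h
  have him := congrArg Complex.im h
  simp [Complex.add_im, Complex.mul_im] at him
  exact absurd him (ne_of_gt (Real.sinh_pos_iff.mpr ht))

lemma pole_mk_eq (t : ℝ) (ht : 0 < t) (p q : Fin 3 → ℝ)
    (hp : ∑ i, p i ^ 2 = 1) (hq : ∑ i, q i ^ 2 = 1)
    (hp0 : p 0 = 0) (hp1 : p 1 = 0) (hq0 : q 0 = 0) (hq1 : q 1 = 0) :
    Projectivization.mk ℂ (whitneyVec t p) (whitneyVec_ne_zero t p hp) =
      Projectivization.mk ℂ (whitneyVec t q) (whitneyVec_ne_zero t q hq) := by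
  rw [Projectivization.mk_eq_mk_iff]
  refine ⟨Units.mk0 (((p 2 : ℂ) * Real.cosh t + Complex.I * Real.sinh t) /
      ((q 2 : ℂ) * Real.cosh t + Complex.I * Real.sinh t))
      (div_ne_zero (third_ne t ht _) (third_ne t ht _)), ?_⟩
  funext i
  fin_cases i
  · simp [whitneyVec, hp0, hq0]
  · simp [whitneyVec, hp1, hq1]
  · show _ * _ = _
    simp only [whitneyVec, Matrix.cons_val_two, Matrix.tail_cons, Matrix.head_cons, smul_eq_mul]
    exact div_mul_cancel₀ _ (third_ne t ht (q 2))

/-- For every `t` and every `(x,y,z) ∈ S²` the vector `(x, y, z·cosh t + i·sinh t)` is nonzero,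
so the Whitney map `φ_t : S² → ℂP²` is well defined; moreover, for `t > 0`, `φ_t(p) = φ_t(q)`
iff `p = q` or `p` and `q` both belong to `{(0,0,1), (0,0,−1)}`: `φ_t` is injective away from
the poles and identifies the two poles to a single double point. -/
theorem whitney_sphere_double_point :
    (∀ (t : ℝ) (p : Fin 3 → ℝ), ∑ i, p i ^ 2 = 1 → whitneyVec t p ≠ 0) ∧
      ∀ t : ℝ, 0 < t →
        ∀ (p q : Fin 3 → ℝ) (hp : ∑ i, p i ^ 2 = 1) (hq : ∑ i, q i ^ 2 = 1),
          Projectivization.mk ℂ (whitneyVec t p) (whitneyVec_ne_zero t p hp) =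
              Projectivization.mk ℂ (whitneyVec t q) (whitneyVec_ne_zero t q hq) ↔
            p = q ∨
              ((p = ![0, 0, 1] ∨ p = ![0, 0, -1]) ∧ (q = ![0, 0, 1] ∨ q = ![0, 0, -1])) := by
  refine ⟨whitneyVec_ne_zero, fun t ht p q hp hq => ?_⟩
  constructor
  · intro h
    rw [Projectivization.mk_eq_mk_iff] at h
    obtain ⟨a, ha⟩ := h
    have h0 := congrFun ha 0
    have h1 := congrFun ha 1
    have h2 := congrFun ha 2
    simp only [whitneyVec, Pi.smul_apply, Units.smul_def, smul_eq_mul,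
      Matrix.cons_val_zero, Matrix.cons_val_one, Matrix.head_cons,
      Matrix.cons_val_two, Matrix.tail_cons] at h0 h1 h2
    by_cases hz : q 0 = 0 ∧ q 1 = 0
    · -- poles case
      obtain ⟨hz0, hz1⟩ := hz
      have hp0 : p 0 = 0 := by
        have := h0; rw [hz0] at this
        simpa using this.symm
      have hp1 : p 1 = 0 := by
        have := h1; rw [hz1] at this
        simpa using this.symm
      have hq2 : q 2 ^ 2 = 1 := by
        rw [Fin.sum_univ_three, hz0, hz1] at hq; linarith
      have hp2 : p 2 ^ 2 = 1 := by
        rw [Fin.sum_univ_three, hp0, hp1] at hp; linarith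
      right
      constructor
      · rcases sq_eq_one_iff.mp hp2 with h' | h'
        · left; funext i; fin_cases i <;> simp [hp0, hp1, h']
        · right; funext i; fin_cases i <;> simp [hp0, hp1, h']
      · rcases sq_eq_one_iff.mp hq2 with h' | h'
        · left; funext i; fin_cases i <;> simp [hz0, hz1, h']
        · right; funext i; fin_cases i <;> simp [hz0, hz1, h']
    · -- a is real, equal to 1
      have him : (a : ℂ).im = 0 := by
        rcases not_and_or.mp hz with hz' | hz'
        · have := congrArg Complex.im h0
          simp [Complex.mul_im] at this
          rcases this with h' | h'
          · exact h'
          · exact absurd h' hz'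
        · have := congrArg Complex.im h1
          simp [Complex.mul_im] at this
          rcases this with h' | h'
          · exact h'
          · exact absurd h' hz'
      have hre : (a : ℂ).re = 1 := by
        have := congrArg Complex.im h2
        simp [Complex.add_im, Complex.mul_im, him] at this
        have hs : Real.sinh t ≠ 0 := ne_of_gt (Real.sinh_pos_iff.mpr ht)
        rw [Complex.sinh_ofReal_re] at this
        exact mul_right_cancel₀ hs (by rw [one_mul]; exact this)
      have ha1 : (a : ℂ) = 1 := Complex.ext hre him
      rw [ha1] at h0 h1 h2
      simp only [one_mul] at h0 h1 h2
      left
      have e0 : q 0 = p 0 := by exact_mod_cast h0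
      have e1 : q 1 = p 1 := by exact_mod_cast h1
      have e2 : q 2 = p 2 := by
        have := congrArg Complex.re h2
        simp [Complex.add_re, Complex.mul_re] at this
        have hc : Real.cosh t ≠ 0 := ne_of_gt (Real.cosh_pos t)
        rcases this with h' | h'
        · exact h'
        · exact absurd h' hc
      funext i; fin_cases i <;> simp [e0.symm, e1.symm, e2.symm]
  · rintro (rfl | ⟨hP, hQ⟩)
    · rfl
    · have hp0 : p 0 = 0 := by rcases hP with h | h <;> rw [h] <;> simp
      have hp1 : p 1 = 0 := by rcases hP with h | h <;> rw [h] <;> simp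
      have hq0 : q 0 = 0 := by rcases hQ with h | h <;> rw [h] <;> simp
      have hq1 : q 1 = 0 := by rcases hQ with h | h <;> rw [h] <;> simp
      exact pole_mk_eq t ht p q hp hq hp0 hp1 hq0 hq1
end

section
/- Let (a,b) ∈ ℂ² ∖ {(0,0)}. For every z ∈ ℂ the vector (−a·conj(z) − b·|z|², a + b·z, 1 + |z|²) ∈ ℂ³ is nonzero (its third coordinate is the positive real number 1 + |z|²), so the map φ_{a,b} : ℂ → ℂP², φ_{a,b}(z) = [(−a·conj(z) − b·|z|², a + b·z, 1 + |z|²)], is well defined; moreover φ_{a,b} is injective. -/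
/-- The vector of `ℂ³` defining the map `φ_{a,b}` at `z ∈ ℂ`. -/
noncomputable def phiVec (a b z : ℂ) : Fin 3 → ℂ :=
  ![-a * (starRingEnd ℂ) z - b * (z * (starRingEnd ℂ) z), a + b * z, 1 + z * (starRingEnd ℂ) z]

lemma phiVec_ne_zero (a b z : ℂ) : phiVec a b z ≠ 0 := by
  intro h
  have h2 := congrFun h 2
  simp only [phiVec, Matrix.cons_val_two, Matrix.tail_cons, Matrix.head_cons,
    Pi.zero_apply, Complex.mul_conj] at h2
  have : (1 + Complex.normSq z : ℝ) = 0 := by exact_mod_cast h2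
  nlinarith [Complex.normSq_nonneg z]

/-- For `(a,b) ∈ ℂ² ∖ {(0,0)}`, the vector `(−a·z̄ − b·|z|², a + b·z, 1 + |z|²)` is nonzero for
every `z ∈ ℂ`, so the map `φ_{a,b} : ℂ → ℂP²` is well defined; moreover `φ_{a,b}` is
injective. -/
theorem phi_ab_well_defined_injective (a b : ℂ) (hab : (a, b) ≠ (0, 0)) :
    (∀ z : ℂ, phiVec a b z ≠ 0) ∧
      Function.Injective fun z : ℂ => Projectivization.mk ℂ (phiVec a b z) (phiVec_ne_zero a b z) := by
  refine ⟨phiVec_ne_zero a b, fun z w h => ?_⟩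
  simp only at h
  rw [Projectivization.mk_eq_mk_iff] at h
  obtain ⟨c, hc⟩ := h
  have h0 := congrFun hc 0
  have h1 := congrFun hc 1
  simp only [phiVec, Pi.smul_apply, Units.smul_def, smul_eq_mul,
    Matrix.cons_val_zero, Matrix.cons_val_one, Matrix.head_cons] at h0 h1
  have hcne : (c : ℂ) ≠ 0 := c.ne_zero
  by_cases habz : a + b * z = 0
  · have habw : a + b * w = 0 := by
      have : (c : ℂ) * (a + b * w) = 0 := by rw [h1, habz]
      exact (mul_eq_zero.mp this).resolve_left hcne
    by_cases hb : b = 0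
    · exfalso
      apply hab
      have ha : a = 0 := by simpa [hb] using habz
      simp [ha, hb]
    · have : b * z = b * w := by
        have hz : b * z = -a := by linear_combination habz
        have hw : b * w = -a := by linear_combination habw
        rw [hz, hw]
      exact mul_left_cancel₀ hb this
  · have key : ((starRingEnd ℂ) z - (starRingEnd ℂ) w) * (a + b * z) = 0 := by
      linear_combination h0 + (starRingEnd ℂ) w * h1
    have : (starRingEnd ℂ) z = (starRingEnd ℂ) w :=
      sub_eq_zero.mp ((mul_eq_zero.mp key).resolve_right habz)
    exact (starRingEnd ℂ).injective this
end

section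
/- Let a, b, z ∈ ℂ and set u = (1, z, 0) ∈ ℂ³ and v = (conj(z), −1, conj(a + b·z)) ∈ ℂ³. Then ∑_{i} u_i · conj(v_i) = 0 (so the pair ([u],[v]) lies in the twistor space 𝒫⁻), and the cross product of the conjugates satisfies (conj ∘ u) ×₃ (conj ∘ v) = (conj(z)·(a + b·z), −(a + b·z), −(1 + |z|²)) = −(−a·conj(z) − b·|z|², a + b·z, 1 + |z|²). Hence the twistor projection π⁻([u],[v]) = [(conj ∘ u) ×₃ (conj ∘ v)] equals the point φ_{a,b}(z) = [(−a·conj(z) − b·|z|², a + b·z, 1 + |z|²)] of ℂP². -/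
open Matrix

/-- The holomorphic twistor lifting vector `(1, z, 0)`. -/
noncomputable def uVec (z : ℂ) : Fin 3 → ℂ := ![1, z, 0]

/-- The anti-holomorphic twistor lifting vector `(z̄, −1, conj(a + b z))`. -/
noncomputable def vVec (a b z : ℂ) : Fin 3 → ℂ :=
  ![(starRingEnd ℂ) z, -1, (starRingEnd ℂ) (a + b * z)]

lemma crossVec_ne_zero (a b z : ℂ) :
    (![(starRingEnd ℂ) z * (a + b * z), -(a + b * z),
        -(1 + z * (starRingEnd ℂ) z)] : Fin 3 → ℂ) ≠ 0 := by
  intro h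
  have h2 := congrFun h 2
  simp only [Matrix.cons_val_two, Matrix.tail_cons, Matrix.head_cons, Pi.zero_apply,
    neg_eq_zero, Complex.mul_conj] at h2
  have : (1 + Complex.normSq z : ℝ) = 0 := by exact_mod_cast h2
  nlinarith [Complex.normSq_nonneg z]

/-- The pair `([u],[v])` with `u = (1, z, 0)`, `v = (z̄, −1, conj(a + b z))` lies in the
twistor space `𝒫⁻`, and its twistor projection `π⁻([u],[v]) = [ū ×₃ v̄]` is exactly the
point `φ_{a,b}(z) = [(−a·z̄ − b·|z|², a + b·z, 1 + |z|²)]` of `ℂP²`. -/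
theorem twistor_lift_of_phi_ab (a b z : ℂ) :
    (∑ i, uVec z i * (starRingEnd ℂ) (vVec a b z i) = 0) ∧
      ((fun i => (starRingEnd ℂ) (uVec z i)) ⨯₃ (fun i => (starRingEnd ℂ) (vVec a b z i)) =
        ![(starRingEnd ℂ) z * (a + b * z), -(a + b * z), -(1 + z * (starRingEnd ℂ) z)]) ∧
      (![(starRingEnd ℂ) z * (a + b * z), -(a + b * z), -(1 + z * (starRingEnd ℂ) z)]
          : Fin 3 → ℂ) = -phiVec a b z ∧
      Projectivization.mk ℂ
          (![(starRingEnd ℂ) z * (a + b * z), -(a + b * z), -(1 + z * (starRingEnd ℂ) z)])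
          (crossVec_ne_zero a b z) =
        Projectivization.mk ℂ (phiVec a b z) (phiVec_ne_zero a b z) := by
  have hsum : ∑ i, uVec z i * (starRingEnd ℂ) (vVec a b z i) = 0 := by
    simp [uVec, vVec, Fin.sum_univ_three, map_add, _root_.map_mul]
  have hneg : (![(starRingEnd ℂ) z * (a + b * z), -(a + b * z), -(1 + z * (starRingEnd ℂ) z)]
      : Fin 3 → ℂ) = -phiVec a b z := by
    funext i
    fin_cases i <;> simp [phiVec] <;> ring
  have hcross : ((fun i => (starRingEnd ℂ) (uVec z i)) ⨯₃ (fun i => (starRingEnd ℂ) (vVec a b z i)) =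
      ![(starRingEnd ℂ) z * (a + b * z), -(a + b * z), -(1 + z * (starRingEnd ℂ) z)]) := by
    funext i
    fin_cases i <;>
      simp [uVec, vVec, crossProduct, map_add, _root_.map_mul, Complex.conj_conj] <;> ring
  refine ⟨hsum, hcross, hneg, ?_⟩
  rw [Projectivization.mk_eq_mk_iff]
  exact ⟨Units.mk0 (-1) (by norm_num), by rw [hneg]; simp⟩
end

section
/- Let (a,b) ∈ ℂ² ∖ {(0,0)}. For every z ∈ ℂ, the vector (conj(b)·z·(|z|² + 1) − conj(a)·z², −(conj(b) + conj(a)·|z|²·z), conj(a)·(|z|² + 1) − conj(b)·conj(z)) ∈ ℂ³ is nonzero; hence the map ψ_{[(a,b)]} : ℂ → ℂP² sending z to the class of this vector is well defined. -/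
/-- The vector of `ℂ³` defining the map `ψ_{[(a,b)]}` at `z ∈ ℂ`. -/
noncomputable def psiVec (a b z : ℂ) : Fin 3 → ℂ :=
  ![(starRingEnd ℂ) b * z * (z * (starRingEnd ℂ) z + 1) - (starRingEnd ℂ) a * z ^ 2,
    -((starRingEnd ℂ) b + (starRingEnd ℂ) a * (z * (starRingEnd ℂ) z) * z),
    (starRingEnd ℂ) a * (z * (starRingEnd ℂ) z + 1) - (starRingEnd ℂ) b * (starRingEnd ℂ) z]

/-- For `(a,b) ∈ ℂ² ∖ {(0,0)}` and every `z ∈ ℂ`, the vector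
`(b̄·z·(|z|²+1) − ā·z², −(b̄ + ā·|z|²·z), ā·(|z|²+1) − b̄·z̄)` is nonzero; hence the map
`ψ_{[(a,b)]} : ℂ → ℂP²` sending `z` to its class is well defined. -/
theorem psiVec_ne_zero (a b : ℂ) (hab : (a, b) ≠ (0, 0)) (z : ℂ) :
    psiVec a b z ≠ 0 := by
  intro h
  have h2 : -((starRingEnd ℂ) b + (starRingEnd ℂ) a * (z * (starRingEnd ℂ) z) * z) = 0 := by
    have := congr_fun h 1; simpa [psiVec] using this
  have h3 : (starRingEnd ℂ) a * (z * (starRingEnd ℂ) z + 1) - (starRingEnd ℂ) b * (starRingEnd ℂ) z = 0 := by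
    have := congr_fun h 2; simpa [psiVec] using this
  have hb : (starRingEnd ℂ) b = -((starRingEnd ℂ) a * (z * (starRingEnd ℂ) z) * z) := by
    linear_combination -h2
  rw [hb] at h3
  have key : (starRingEnd ℂ) a * ((z * (starRingEnd ℂ) z) ^ 2 + (z * (starRingEnd ℂ) z) + 1) = 0 := by
    have hz : (starRingEnd ℂ) z * z = z * (starRingEnd ℂ) z := mul_comm _ _
    linear_combination h3
  have hpos : ((z * (starRingEnd ℂ) z) ^ 2 + (z * (starRingEnd ℂ) z) + 1) ≠ 0 := by
    have hns : z * (starRingEnd ℂ) z = (Complex.normSq z : ℂ) := by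
      rw [Complex.mul_conj]
    rw [hns]
    have : ((Complex.normSq z : ℂ) ^ 2 + (Complex.normSq z : ℂ) + 1)
        = ((Complex.normSq z ^ 2 + Complex.normSq z + 1 : ℝ) : ℂ) := by push_cast; ring
    rw [this]
    have hr : (0:ℝ) < Complex.normSq z ^ 2 + Complex.normSq z + 1 := by nlinarith [Complex.normSq_nonneg z]
    exact_mod_cast hr.ne'
  have ha : (starRingEnd ℂ) a = 0 := by
    rcases mul_eq_zero.mp key with h | h
    · exact h
    · exact absurd h hpos
  have hb0 : (starRingEnd ℂ) b = 0 := by rw [hb, ha]; ring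
  apply hab
  have : a = 0 := by simpa using congrArg (starRingEnd ℂ) ha
  have : b = 0 := by simpa using congrArg (starRingEnd ℂ) hb0
  simp_all
end
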